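/- For any ordering σ of {2,…,n}, the σ-minimal assignment is unique: there is exactly one bistochastic matrix that is not σ-dominated by any other bistochastic matrix. -/

import Mathlib

open Finset

/-- An n×n matrix with nonnegative real entries whose rows and columns each sum to 1. -/
def Bistochastic {n : ℕ} (x : Fin n → Fin n → ℝ) : Prop :=
  (∀ i o, 0 ≤ x i o) ∧ (∀ i, ∑ o, x i o = 1) ∧ (∀ o, ∑ i, x i o = 1)

/-- `tailProb rank x i k` = probability that agent `i` receives an object ranked `k`-th
or worse (ranks are 0-indexed: rank 0 = most preferred). -/
def tailProb {n : ℕ} (rank : Fin n → Fin n → Fin n) (x : Fin n → Fin n → ℝ)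
    (i k : Fin n) : ℝ :=
  ∑ o ∈ Finset.univ.filter (fun o => k ≤ rank i o), x i o

/-- The values of `v` rearranged in non-increasing order. -/
noncomputable def sortedDesc {n : ℕ} (v : Fin n → ℝ) : Fin n → ℝ :=
  fun j => v (Tuple.sort (fun i => -v i) j)

/-- Block `t` of `Bvec rank x` is the non-increasing rearrangement of the tail
probabilities at threshold `n-1-t`; so blocks run from the worst rank down. -/
noncomputable def Bvec {n : ℕ} (rank : Fin n → Fin n → Fin n) (x : Fin n → Fin n → ℝ) :
    Fin n → Fin n → ℝ :=
  fun t => sortedDesc (fun i => tailProb rank x i t.rev)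

/-- Lexicographic strict order on doubly-indexed vectors (outer index first). -/
def BlockLexLt {α β : Type*} [LinearOrder α] [LinearOrder β] (u v : α → β → ℝ) : Prop :=
  ∃ t s, u t s < v t s ∧ ∀ t' s', (t' < t ∨ (t' = t ∧ s' < s)) → u t' s' = v t' s'

/-- `x` Rawlsian-dominates `y`. -/
def RDom {n : ℕ} (rank : Fin n → Fin n → Fin n) (x y : Fin n → Fin n → ℝ) : Prop :=
  BlockLexLt (Bvec rank x) (Bvec rank y)

/-- A Rawlsian assignment: a bistochastic matrix not R-dominated by any other. -/
def Rawlsian {n : ℕ} (rank : Fin n → Fin n → Fin n) (x : Fin n → Fin n → ℝ) : Prop :=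
  Bistochastic x ∧ ∀ y, Bistochastic y → ¬ RDom rank y x

/-- `Bσ`: block `j` is the non-increasing rearrangement of the tail probabilities at
threshold `σ j`. -/
noncomputable def BvecSigma {m : ℕ} (σ : Fin m → Fin (m + 1))
    (rank : Fin (m + 1) → Fin (m + 1) → Fin (m + 1)) (x : Fin (m + 1) → Fin (m + 1) → ℝ) :
    Fin m → Fin (m + 1) → ℝ :=
  fun j => sortedDesc (fun i => tailProb rank x i (σ j))

def SigmaDom {m : ℕ} (σ : Fin m → Fin (m + 1))
    (rank : Fin (m + 1) → Fin (m + 1) → Fin (m + 1)) (x y : Fin (m + 1) → Fin (m + 1) → ℝ) :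
    Prop :=
  BlockLexLt (BvecSigma σ rank x) (BvecSigma σ rank y)

def SigmaMinimal {m : ℕ} (σ : Fin m → Fin (m + 1))
    (rank : Fin (m + 1) → Fin (m + 1) → Fin (m + 1)) (x : Fin (m + 1) → Fin (m + 1) → ℝ) :
    Prop :=
  Bistochastic x ∧ ∀ y, Bistochastic y → ¬ SigmaDom σ rank y x

/-!
Let `S x` collect the blockwise partial sums of the sorted tail vectors of an assignment `x`, i.e.
the sums of the `k` largest tail probabilities at each threshold. Taking partial sums is strictly
monotone for the lexicographic order, which on `ℝ`-valued vectors is an ordered group, and each such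
sum is convex in the assignment. So if `x` and `y` are σ-minimal and `z` is their average, then
`S x, S y ≤ S z` lexicographically while `2 S z ≤ S x + S y` pointwise, which forces
`S x = S y = S z`. The tail vectors of `x`, `y` and `z` then have the same sorted values, hence the
same sum of squares, and the parallelogram law makes those of `x` and `y` equal. Finally the tail
probabilities at all thresholds (threshold `0` being the row sum) determine the assignment.
-/

open Function

theorem blockLexLt_iff_toLex_lt {α β : Type*} [LinearOrder α] [LinearOrder β]
    {u v : α → β → ℝ} :
    BlockLexLt u v ↔ toLex (fun t => toLex (u t)) < toLex (fun t => toLex (v t)) := by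
  constructor
  · rintro ⟨t, s, hlt, heq⟩
    exact ⟨t, fun t' ht' => funext fun s' => heq t' s' (.inl ht'),
      s, fun s' hs' => heq t s' (.inr ⟨rfl, hs'⟩), hlt⟩
  · rintro ⟨t, ht, s, hs, hlt⟩
    refine ⟨t, s, hlt, ?_⟩
    rintro t' s' (h | ⟨rfl, h⟩)
    · exact congrFun (ht t' h) s'
    · exact hs s' h

theorem StrictMono.toLex_comp {ι β γ : Type*} [LinearOrder ι] [PartialOrder β] [PartialOrder γ]
    {f : β → γ} (hf : StrictMono f) :
    StrictMono fun x : Lex (ι → β) => toLex (f ∘ ofLex x) := by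
  rintro x y ⟨i, hi, hlt⟩
  exact ⟨i, fun j hj => congrArg f (hi j hj), hf hlt⟩

theorem strictMono_toLex_sum_Iic {α M : Type*} [LinearOrder α] [LocallyFiniteOrderBot α]
    [AddCommMonoid M] [PartialOrder M] [IsOrderedCancelAddMonoid M] :
    StrictMono fun a : Lex (α → M) => toLex fun s => ∑ j ∈ Iic s, ofLex a j := by
  rintro a b ⟨i, hi, hlt⟩
  refine ⟨i, fun j hj => sum_congr rfl fun k hk => hi k ((mem_Iic.1 hk).trans_lt hj), ?_⟩
  have hIio : ∑ k ∈ Iio i, ofLex a k = ∑ k ∈ Iio i, ofLex b k :=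
    sum_congr rfl fun k hk => hi k (mem_Iio.1 hk)
  change ∑ k ∈ Iic i, ofLex a k < ∑ k ∈ Iic i, ofLex b k
  rw [Iic_eq_cons_Iio, sum_cons, sum_cons, hIio]
  exact add_lt_add_left hlt _

theorem sum_le_sum_Iic_of_antitone {α M : Type*} [LinearOrder α] [LocallyFiniteOrderBot α]
    [AddCommMonoid M] [PartialOrder M] [IsOrderedAddMonoid M] {a : α → M} (ha : Antitone a)
    {T : Finset α} {s : α} (hT : #T = #(Iic s)) : ∑ i ∈ T, a i ≤ ∑ i ∈ Iic s, a i := by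
  have hcard : #(T \ Iic s) = #(Iic s \ T) := by
    have h1 := card_sdiff_add_card_inter T (Iic s)
    have h2 := card_sdiff_add_card_inter (Iic s) T
    rw [inter_comm] at h2
    omega
  have hout : ∑ i ∈ T \ Iic s, a i ≤ ∑ i ∈ Iic s \ T, a i := calc
    ∑ i ∈ T \ Iic s, a i ≤ #(T \ Iic s) • a s :=
      sum_le_card_nsmul _ _ _ fun i hi => ha (le_of_lt (by simpa using (mem_sdiff.1 hi).2))
    _ = #(Iic s \ T) • a s := by rw [hcard]
    _ ≤ ∑ i ∈ Iic s \ T, a i :=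
      card_nsmul_le_sum _ _ _ fun i hi => ha (mem_Iic.1 (mem_sdiff.1 hi).1)
  rw [← sum_inter_add_sum_sdiff T (Iic s), ← sum_inter_add_sum_sdiff (Iic s) T, inter_comm]
  exact add_le_add le_rfl hout

theorem sortedDesc_eq_comp {n : ℕ} (v : Fin n → ℝ) :
    sortedDesc v = v ∘ Tuple.sort (fun i => -v i) := rfl

theorem antitone_sortedDesc {n : ℕ} (v : Fin n → ℝ) : Antitone (sortedDesc v) :=
  fun _ _ hab => neg_le_neg_iff.1 (Tuple.monotone_sort (fun i => -v i) hab)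

theorem sum_sq_sortedDesc {n : ℕ} (v : Fin n → ℝ) : ∑ j, sortedDesc v j ^ 2 = ∑ i, v i ^ 2 :=
  Equiv.sum_comp (Tuple.sort fun i => -v i) fun i => v i ^ 2

noncomputable def topSum {n : ℕ} (v : Fin n → ℝ) (s : Fin n) : ℝ :=
  ∑ j ∈ Iic s, sortedDesc v j

theorem sum_le_topSum {n : ℕ} (v : Fin n → ℝ) {T : Finset (Fin n)} {s : Fin n}
    (hT : #T = #(Iic s)) : ∑ i ∈ T, v i ≤ topSum v s := by
  set π := Tuple.sort fun i => -v i
  calc ∑ i ∈ T, v i = ∑ j ∈ T.map π.symm.toEmbedding, sortedDesc v j := by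
        simp [sum_map, sortedDesc_eq_comp, π]
    _ ≤ topSum v s := sum_le_sum_Iic_of_antitone (antitone_sortedDesc v) (by rw [card_map, hT])

theorem two_mul_topSum_avg_le {n : ℕ} (u v : Fin n → ℝ) (s : Fin n) :
    2 * topSum (fun i => (u i + v i) / 2) s ≤ topSum u s + topSum v s := by
  set S := (Iic s).map (Tuple.sort fun i => -((u i + v i) / 2)).toEmbedding
  have hS : #S = #(Iic s) := card_map _
  calc 2 * topSum (fun i => (u i + v i) / 2) s = ∑ i ∈ S, u i + ∑ i ∈ S, v i := by
        rw [topSum, mul_sum, ← sum_add_distrib, sum_map]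
        exact sum_congr rfl fun j _ => by
          simp only [sortedDesc_eq_comp, comp_apply, Equiv.toEmbedding_apply]; ring
    _ ≤ topSum u s + topSum v s := add_le_add (sum_le_topSum u hS) (sum_le_topSum v hS)

theorem eq_of_sortedDesc_eq_sortedDesc_avg {n : ℕ} {u v : Fin n → ℝ}
    (hu : sortedDesc u = sortedDesc fun i => (u i + v i) / 2)
    (hv : sortedDesc v = sortedDesc fun i => (u i + v i) / 2) : u = v := by
  have h1 := sum_sq_sortedDesc u
  have h2 := sum_sq_sortedDesc v
  have h3 := sum_sq_sortedDesc fun i => (u i + v i) / 2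
  rw [hu] at h1
  rw [hv] at h2
  have hsq : ∑ i, (u i - v i) ^ 2 = 0 := calc
    ∑ i, (u i - v i) ^ 2 = ∑ i, (2 * u i ^ 2 + 2 * v i ^ 2 - 4 * ((u i + v i) / 2) ^ 2) :=
        sum_congr rfl fun i _ => by ring
    _ = 0 := by simp only [sum_sub_distrib, sum_add_distrib, ← mul_sum]; linarith
  funext i
  have := (sum_eq_zero_iff_of_nonneg fun i _ => sq_nonneg (u i - v i)).1 hsq i (mem_univ i)
  exact sub_eq_zero.1 (pow_eq_zero_iff two_ne_zero |>.1 this)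

theorem eq_of_not_blockLexLt_sortedDesc_avg {m n : ℕ} {u v : Fin m → Fin n → ℝ}
    (hu : ¬ BlockLexLt (fun t => sortedDesc fun i => (u t i + v t i) / 2)
      fun t => sortedDesc (u t))
    (hv : ¬ BlockLexLt (fun t => sortedDesc fun i => (u t i + v t i) / 2)
      fun t => sortedDesc (v t)) :
    u = v := by
  let w : Fin m → Fin n → ℝ := fun t i => (u t i + v t i) / 2
  let sorted (x : Fin m → Fin n → ℝ) : Lex (Fin m → Lex (Fin n → ℝ)) :=
    toLex fun t => toLex (sortedDesc (x t))
  let Φ (x : Lex (Fin m → Lex (Fin n → ℝ))) : Lex (Fin m → Lex (Fin n → ℝ)) :=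
    toLex ((fun a : Lex (Fin n → ℝ) => toLex fun s => ∑ j ∈ Iic s, ofLex a j) ∘ ofLex x)
  have hΦ : StrictMono Φ := strictMono_toLex_sum_Iic.toLex_comp
  have hu' : Φ (sorted u) ≤ Φ (sorted w) :=
    hΦ.monotone (not_lt.1 (mt blockLexLt_iff_toLex_lt.2 hu))
  have hv' : Φ (sorted v) ≤ Φ (sorted w) :=
    hΦ.monotone (not_lt.1 (mt blockLexLt_iff_toLex_lt.2 hv))
  have hconv : Φ (sorted w) + Φ (sorted w) ≤ Φ (sorted u) + Φ (sorted v) :=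
    Pi.toLex_monotone fun t => Pi.toLex_monotone fun s => by
      change topSum (w t) s + topSum (w t) s ≤ topSum (u t) s + topSum (v t) s
      linarith [two_mul_topSum_avg_le (u t) (v t) s]
  obtain ⟨hu_eq, hv_eq⟩ :=
    (add_eq_add_iff_eq_and_eq hu' hv').1 ((add_le_add hu' hv').antisymm hconv)
  funext t
  exact eq_of_sortedDesc_eq_sortedDesc_avg (congrFun (hΦ.injective hu_eq) t)
    (congrFun (hΦ.injective hv_eq) t)

theorem eq_of_forall_sum_Ici_eq {α M : Type*} [LinearOrder α] [LocallyFiniteOrderTop α]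
    [WellFoundedGT α] [AddCancelCommMonoid M] {f g : α → M}
    (h : ∀ k, ∑ i ∈ Ici k, f i = ∑ i ∈ Ici k, g i) : f = g := by
  funext k
  induction k using WellFoundedGT.induction with
  | _ k ih =>
    have hk := h k
    rw [Ici_eq_cons_Ioi, sum_cons, sum_cons,
      sum_congr rfl fun j hj => ih j (mem_Ioi.1 hj)] at hk
    exact add_right_cancel hk

theorem tailProb_eq_sum_Ici {n : ℕ} {rank : Fin n → Fin n → Fin n} {i : Fin n}
    (hrank : Bijective (rank i)) (x : Fin n → Fin n → ℝ) (k : Fin n) :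
    tailProb rank x i k = ∑ r ∈ Ici k, x i ((Equiv.ofBijective _ hrank).symm r) := by
  rw [tailProb, ← filter_le_eq_Ici]
  exact sum_equiv (Equiv.ofBijective _ hrank) (by simp) (by simp)

theorem eq_of_tailProb_eq {n : ℕ} {rank : Fin n → Fin n → Fin n}
    (hrank : ∀ i, Bijective (rank i)) {x y : Fin n → Fin n → ℝ}
    (h : ∀ i k, tailProb rank x i k = tailProb rank y i k) : x = y := by
  funext i o
  let e := Equiv.ofBijective _ (hrank i)
  have hrow : (fun r => x i (e.symm r)) = fun r => y i (e.symm r) :=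
    eq_of_forall_sum_Ici_eq fun k => by
      rw [← tailProb_eq_sum_Ici (hrank i) x k, ← tailProb_eq_sum_Ici (hrank i) y k, h i k]
  simpa using congrFun hrow (e o)

theorem Bistochastic.tailProb_zero {n : ℕ} {x : Fin (n + 1) → Fin (n + 1) → ℝ}
    (hx : Bistochastic x) (rank : Fin (n + 1) → Fin (n + 1) → Fin (n + 1)) (i : Fin (n + 1)) :
    tailProb rank x i 0 = 1 := by
  simpa [tailProb] using hx.2.1 i

theorem Bistochastic.avg {n : ℕ} {x y : Fin n → Fin n → ℝ} (hx : Bistochastic x)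
    (hy : Bistochastic y) : Bistochastic fun i o => (x i o + y i o) / 2 := by
  refine ⟨fun i o => by linarith [hx.1 i o, hy.1 i o], fun i => ?_, fun o => ?_⟩
  · rw [← sum_div, sum_add_distrib, hx.2.1 i, hy.2.1 i]; norm_num
  · rw [← sum_div, sum_add_distrib, hx.2.2 o, hy.2.2 o]; norm_num

theorem tailProb_avg {n : ℕ} (rank : Fin n → Fin n → Fin n) (x y : Fin n → Fin n → ℝ)
    (i k : Fin n) :
    tailProb rank (fun i o => (x i o + y i o) / 2) i k
      = (tailProb rank x i k + tailProb rank y i k) / 2 := by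
  rw [tailProb, ← sum_div, sum_add_distrib, tailProb, tailProb]

theorem Fin.exists_eq_of_injective_of_ne_zero {m : ℕ} {σ : Fin m → Fin (m + 1)}
    (hinj : Injective σ) (hne : ∀ j, σ j ≠ 0) {k : Fin (m + 1)} (hk : k ≠ 0) : ∃ j, σ j = k := by
  have hpred : Injective fun j => (σ j).pred (hne j) := fun a b hab => hinj (Fin.pred_inj.1 hab)
  obtain ⟨j, hj⟩ := Finite.surjective_of_injective hpred (k.pred hk)
  exact ⟨j, Fin.pred_inj.1 hj⟩

/-- For any ordering `σ` of the rank thresholds `{2,…,n}` (0-indexed: an injection of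
`Fin m` into the nonzero ranks of `Fin (m+1)`), the σ-minimal assignment is unique. -/
theorem sigma_minimal_unique {m : ℕ} (σ : Fin m → Fin (m + 1))
    (hσinj : Function.Injective σ) (hσne : ∀ j, σ j ≠ 0)
    (rank : Fin (m + 1) → Fin (m + 1) → Fin (m + 1))
    (hrank : ∀ i, Function.Bijective (rank i))
    (x y : Fin (m + 1) → Fin (m + 1) → ℝ)
    (hx : SigmaMinimal σ rank x) (hy : SigmaMinimal σ rank y) :
    x = y := by
  obtain ⟨hxb, hxmin⟩ := hx
  obtain ⟨hyb, hymin⟩ := hy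
  have hz := hxb.avg hyb
  have hBz : BvecSigma σ rank (fun i o => (x i o + y i o) / 2) = fun j => sortedDesc fun i =>
      (tailProb rank x i (σ j) + tailProb rank y i (σ j)) / 2 := by
    funext j
    simp only [BvecSigma, tailProb_avg]
  have hσtail : (fun j i => tailProb rank x i (σ j)) = fun j i => tailProb rank y i (σ j) := by
    have hxz := hxmin _ hz
    have hyz := hymin _ hz
    rw [SigmaDom, hBz] at hxz hyz
    exact eq_of_not_blockLexLt_sortedDesc_avg hxz hyz
  refine eq_of_tailProb_eq hrank fun i k => ?_
  rcases eq_or_ne k 0 with rfl | hk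
  · rw [hxb.tailProb_zero, hyb.tailProb_zero]
  · obtain ⟨j, rfl⟩ := Fin.exists_eq_of_injective_of_ne_zero hσinj hσne hk
    exact congrFun (congrFun hσtail j) i
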